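/- arXiv:1607.00473 — 5 statements merged into one kernel-verified Lean document; each statement's English description precedes it below -/
import Mathlib

section
/- Let G be a connected bipartite simple graph on n ≥ 3 vertices with maximum degree Δ ≤ n−2, and let S = Σ_{i=1}^n Tr_G(v_i). For every vertex v of G with deg(v) = Δ, putting D_v = Tr_G(v), a = (Δ+1)(S − 2D_v − 2 t_v Δ) + 2nΔ² and b = D_v² − 2SΔ² + 2 D_v t_v Δ + t_v² Δ², the largest distance eigenvalue satisfies ρ^𝒟(G) ≥ (a + √(a² + 4b(1+Δ)(n−Δ−1))) / (2(1+Δ)(n−Δ−1)). -/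
open Finset Matrix

noncomputable def distMatrix {V : Type*} [Fintype V] (G : SimpleGraph V) : Matrix V V ℝ :=
  Matrix.of fun u v => (G.dist u v : ℝ)

theorem distMatrix_isHermitian {V : Type*} [Fintype V] (G : SimpleGraph V) :
    (distMatrix G).IsHermitian := by
  show (distMatrix G)ᴴ = distMatrix G
  ext i j
  simp [distMatrix, Matrix.conjTranspose_apply, SimpleGraph.dist_comm]

noncomputable def transmission {V : Type*} [Fintype V] (G : SimpleGraph V) (v : V) : ℝ :=
  ∑ u, (G.dist v u : ℝ)

noncomputable def distSLMatrix {V : Type*} [Fintype V] [DecidableEq V] (G : SimpleGraph V) :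
    Matrix V V ℝ :=
  Matrix.diagonal (transmission G) + distMatrix G

theorem distSLMatrix_isHermitian {V : Type*} [Fintype V] [DecidableEq V] (G : SimpleGraph V) :
    (distSLMatrix G).IsHermitian :=
  (Matrix.isHermitian_diagonal _).add (distMatrix_isHermitian G)

noncomputable def maxEig {V : Type*} [Fintype V] [DecidableEq V] {A : Matrix V V ℝ}
    (hA : A.IsHermitian) : ℝ :=
  ⨆ i, hA.eigenvalues i

noncomputable def minEig {V : Type*} [Fintype V] [DecidableEq V] {A : Matrix V V ℝ}
    (hA : A.IsHermitian) : ℝ :=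
  ⨅ i, hA.eigenvalues i

noncomputable def distSpread {V : Type*} [Fintype V] [DecidableEq V] (G : SimpleGraph V) : ℝ :=
  maxEig (distMatrix_isHermitian G) - minEig (distMatrix_isHermitian G)

noncomputable def distSLSpread {V : Type*} [Fintype V] [DecidableEq V] (G : SimpleGraph V) : ℝ :=
  maxEig (distSLMatrix_isHermitian G) - minEig (distSLMatrix_isHermitian G)

/-!
Take the test vector `x` that equals `p` on the closed neighbourhood `N[v]` (of size `Δ + 1`) and
`q` elsewhere. Its distance quadratic form only involves `S`, the transmission sum
`D_v + Δ t_v` over `N[v]`, and the distance sum inside `N[v]`; in a bipartite graph the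
neighbours of `v` are pairwise at distance at least `2`, so the latter is at least `2Δ²`. This
bounds `xᵀ𝒟x` below by a quadratic form in `(p, q)`, and `p, q` are chosen as an eigenvector of the
resulting weighted `2 × 2` problem, whose larger eigenvalue is the stated root. Rayleigh's
principle finishes the proof.
-/

theorem dotProduct_mulVec_le_maxEig {V : Type*} [Fintype V] [DecidableEq V] {A : Matrix V V ℝ}
    (hA : A.IsHermitian) (x : V → ℝ) : x ⬝ᵥ A *ᵥ x ≤ maxEig hA * (x ⬝ᵥ x) := by
  set U : Matrix V V ℝ := (hA.eigenvectorUnitary : Matrix V V ℝ)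
  have hUU : U * Uᴴ = 1 := Matrix.mem_unitaryGroup_iff.mp hA.eigenvectorUnitary.2
  have hA_eq : A = U * diagonal hA.eigenvalues * Uᴴ := by
    conv_lhs => rw [hA.spectral_theorem]
    rfl
  have hgap_eq :
      maxEig hA • 1 - A = U * diagonal (fun i => maxEig hA - hA.eigenvalues i) * Uᴴ := by
    rw [← diagonal_sub, ← smul_one_eq_diagonal, mul_sub, sub_mul, mul_smul_one, smul_mul, hUU,
      ← hA_eq]
  have hgap : (maxEig hA • 1 - A).PosSemidef := by
    rw [hgap_eq]
    exact (posSemidef_diagonal_iff.mpr fun i =>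
      sub_nonneg.mpr (le_ciSup (Set.finite_range _).bddAbove i)).mul_mul_conjTranspose_same U
  simpa [sub_mulVec, dotProduct_sub, smul_mulVec, dotProduct_smul] using
    hgap.dotProduct_mulVec_nonneg x

section Piecewise

variable {V : Type*} [Fintype V] [DecidableEq V]

theorem dotProduct_mulVec_piecewise {A : Matrix V V ℝ} (hA : A.IsSymm) (s : Finset V) (p q : ℝ) :
    s.piecewise (fun _ => p) (fun _ => q) ⬝ᵥ A *ᵥ s.piecewise (fun _ => p) (fun _ => q) =
      (p - q) ^ 2 * ∑ i ∈ s, ∑ j ∈ s, A i j + 2 * p * q * ∑ i ∈ s, ∑ j, A i j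
        + q ^ 2 * (∑ i, ∑ j, A i j - 2 * ∑ i ∈ s, ∑ j, A i j) := by
  set e : V → ℝ := s.piecewise 1 0
  have hx : s.piecewise (fun _ => p) (fun _ => q) = q • (1 : V → ℝ) + (p - q) • e := by
    ext u
    by_cases hu : u ∈ s <;> simp [e, hu]
  have hsymm : (1 : V → ℝ) ⬝ᵥ A *ᵥ e = e ⬝ᵥ A *ᵥ 1 := by
    rw [dotProduct_mulVec, ← mulVec_transpose, hA, dotProduct_comm]
  have h11 : (1 : V → ℝ) ⬝ᵥ A *ᵥ 1 = ∑ i, ∑ j, A i j := by simp [dotProduct, mulVec]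
  have he1 : e ⬝ᵥ A *ᵥ 1 = ∑ i ∈ s, ∑ j, A i j := by
    simp [e, dotProduct, mulVec, Finset.piecewise]
  have hee : e ⬝ᵥ A *ᵥ e = ∑ i ∈ s, ∑ j ∈ s, A i j := by
    simp [e, dotProduct, mulVec, Finset.piecewise]
  rw [hx]
  simp only [mulVec_add, mulVec_smul, dotProduct_add, add_dotProduct, dotProduct_smul,
    smul_dotProduct, smul_eq_mul, hsymm, h11, he1, hee]
  ring

theorem dotProduct_piecewise_self (s : Finset V) (p q : ℝ) :
    s.piecewise (fun _ => p) (fun _ => q) ⬝ᵥ s.piecewise (fun _ => p) (fun _ => q) =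
      #s * p ^ 2 + (Fintype.card V - #s) * q ^ 2 := by
  nth_rw 2 [← one_mulVec (s.piecewise _ _)]
  rw [dotProduct_mulVec_piecewise isSymm_one]
  simp [one_apply]
  ring

end Piecewise

theorem exists_quadForm_eq_larger_root {k m : ℝ} (hk : 0 < k) (hm : 0 < m) (α β γ : ℝ) :
    ∃ p q : ℝ, 0 < k * p ^ 2 + m * q ^ 2 ∧
      α * p ^ 2 + 2 * β * p * q + γ * q ^ 2 =
        (k * γ + m * α + √((k * γ + m * α) ^ 2 + 4 * (β ^ 2 - α * γ) * k * m)) / (2 * k * m)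
          * (k * p ^ 2 + m * q ^ 2) := by
  set a := k * γ + m * α
  set b := β ^ 2 - α * γ
  set r := √(a ^ 2 + 4 * b * k * m)
  set μ := (a + r) / (2 * k * m)
  have hr : r ^ 2 = a ^ 2 + 4 * b * k * m := by
    refine Real.sq_sqrt ?_
    have : a ^ 2 + 4 * b * k * m = (k * γ - m * α) ^ 2 + 4 * (k * m) * β ^ 2 := by ring
    rw [this]
    positivity
  have hμ : 2 * k * m * μ = a + r := mul_div_cancel₀ _ (by positivity)
  have hroot : k * m * μ ^ 2 = a * μ + b := by
    refine mul_left_cancel₀ (by positivity : 4 * (k * m) ≠ 0) ?_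
    linear_combination (2 * k * m * μ - a + r) * hμ + hr
  -- `(β, μ k - α)` spans the kernel of `[[α - μ k, β], [β, γ - μ m]]`, whose determinant is
  -- `k m μ² - a μ - b`; only when that vector vanishes is `(1, 0)` needed instead.
  by_cases hdeg : β = 0 ∧ μ * k - α = 0
  · refine ⟨1, 0, by simpa using hk, ?_⟩
    linear_combination -hdeg.2
  · refine ⟨β, μ * k - α, ?_, ?_⟩
    · rcases not_and_or.mp hdeg with h | h
      · have := sq_pos_of_ne_zero h; positivity
      · have := sq_pos_of_ne_zero h; positivity
    · linear_combination (α - μ * k) * hroot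

theorem SimpleGraph.two_le_dist_of_adj_of_adj {V : Type*} {G : SimpleGraph V}
    (hconn : G.Connected) (hbip : G.Colorable 2) {v i j : V} (hi : G.Adj v i) (hj : G.Adj v j)
    (hij : i ≠ j) : 2 ≤ G.dist i j := by
  classical
  have hnadj : ¬ G.Adj i j := fun h =>
    hbip.cliqueFree (by norm_num : 2 < 3) {v, i, j} (is3Clique_triple_iff.mpr ⟨hi, hj, h⟩)
  have h0 := hconn.pos_dist_of_ne hij
  have h1 : G.dist i j ≠ 1 := fun h => hnadj (dist_eq_one_iff_adj.mp h)
  omega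

theorem SimpleGraph.two_mul_sq_degree_le_sum_dist {V : Type*} [Fintype V] [DecidableEq V]
    {G : SimpleGraph V} [DecidableRel G.Adj] (hconn : G.Connected) (hbip : G.Colorable 2)
    (v : V) :
    2 * (G.degree v : ℝ) ^ 2 ≤
      ∑ i ∈ insert v (G.neighborFinset v),
        ∑ j ∈ insert v (G.neighborFinset v), (G.dist i j : ℝ) := by
  set N := G.neighborFinset v
  have hvN : v ∉ N := G.notMem_neighborFinset_self v
  have hvj : ∀ j ∈ N, (G.dist v j : ℝ) = 1 := fun j hj => by
    rw [dist_eq_one_iff_adj.mpr ((G.mem_neighborFinset v j).mp hj), Nat.cast_one]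
  have hiv : ∀ i ∈ N, (G.dist i v : ℝ) = 1 := fun i hi => by rw [dist_comm, hvj i hi]
  have hrow : ∀ i ∈ N, 2 * ((#N : ℝ) - 1) ≤ ∑ j ∈ N, (G.dist i j : ℝ) := by
    intro i hi
    rw [← sum_erase N (f := fun j => (G.dist i j : ℝ)) (a := i) (by simp)]
    calc 2 * ((#N : ℝ) - 1) = ∑ j ∈ N.erase i, (2 : ℝ) := by
          rw [sum_const, card_erase_of_mem hi, nsmul_eq_mul, Nat.cast_pred (card_pos.2 ⟨i, hi⟩)]
          ring
      _ ≤ ∑ j ∈ N.erase i, (G.dist i j : ℝ) := sum_le_sum fun j hj => by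
          exact_mod_cast two_le_dist_of_adj_of_adj hconn hbip ((G.mem_neighborFinset v i).mp hi)
            ((G.mem_neighborFinset v j).mp (mem_of_mem_erase hj)) (ne_of_mem_erase hj).symm
  have hsplit : ∑ i ∈ insert v N, ∑ j ∈ insert v N, (G.dist i j : ℝ) =
      2 * #N + ∑ i ∈ N, ∑ j ∈ N, (G.dist i j : ℝ) := by
    simp only [sum_insert hvN, dist_self, Nat.cast_zero, zero_add, sum_add_distrib]
    rw [sum_congr rfl hvj, sum_congr rfl hiv]
    simp only [sum_const, nsmul_eq_mul, mul_one]
    ring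
  have hbound : #N * (2 * ((#N : ℝ) - 1)) ≤ ∑ i ∈ N, ∑ j ∈ N, (G.dist i j : ℝ) := by
    simpa using sum_le_sum hrow
  rw [hsplit, ← G.card_neighborFinset_eq_degree]
  linarith

theorem larger_root_le_maxEig {V : Type*} [Fintype V] [DecidableEq V] {A : Matrix V V ℝ}
    (hA : A.IsHermitian) (s : Finset V) {k m : ℝ} (hk : k = #s)
    (hm : m = Fintype.card V - #s) (hk0 : 0 < k) (hm0 : 0 < m) {S T α : ℝ}
    (hS : ∑ i, ∑ j, A i j = S) (hT : ∑ i ∈ s, ∑ j, A i j = T)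
    (hα : α ≤ ∑ i ∈ s, ∑ j ∈ s, A i j) {a b : ℝ}
    (ha : a = k * (S - 2 * T + α) + m * α) (hb : b = (T - α) ^ 2 - α * (S - 2 * T + α)) :
    (a + √(a ^ 2 + 4 * b * k * m)) / (2 * k * m) ≤ maxEig hA := by
  obtain ⟨p, q, hpos, hQ⟩ := exists_quadForm_eq_larger_root hk0 hm0 α (T - α) (S - 2 * T + α)
  set x := s.piecewise (fun _ => p) (fun _ => q)
  have hnorm : x ⬝ᵥ x = k * p ^ 2 + m * q ^ 2 := by rw [dotProduct_piecewise_self, hk, hm]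
  have hlow : α * p ^ 2 + 2 * (T - α) * p * q + (S - 2 * T + α) * q ^ 2 ≤ x ⬝ᵥ A *ᵥ x := by
    rw [dotProduct_mulVec_piecewise (isHermitian_iff_isSymm.mp hA), hS, hT]
    nlinarith [mul_le_mul_of_nonneg_left hα (sq_nonneg (p - q))]
  subst ha hb
  refine le_of_mul_le_mul_right ?_ hpos
  calc _ = α * p ^ 2 + 2 * (T - α) * p * q + (S - 2 * T + α) * q ^ 2 := hQ.symm
    _ ≤ x ⬝ᵥ A *ᵥ x := hlow
    _ ≤ maxEig hA * (x ⬝ᵥ x) := dotProduct_mulVec_le_maxEig hA x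
    _ = _ := by rw [hnorm]

theorem stmt2_general {V : Type*} [Fintype V] [DecidableEq V] (G : SimpleGraph V) [DecidableRel G.Adj]
    (hconn : G.Connected) (hbip : G.Colorable 2)
    (n : ℕ) (hn : n = Fintype.card V)
    (Δ : ℕ) (hΔn : Δ + 2 ≤ n)
    (S : ℝ) (hS : S = ∑ u, transmission G u)
    (v : V) (hv : G.degree v = Δ)
    (Dv tv a b : ℝ)
    (hDv : Dv = transmission G v)
    (htv : tv = (∑ u ∈ G.neighborFinset v, transmission G u) / Δ)
    (ha : a = (Δ + 1) * (S - 2*Dv - 2*tv*Δ) + 2*n*Δ^2)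
    (hb : b = Dv^2 - 2*S*Δ^2 + 2*Dv*tv*Δ + tv^2*Δ^2) :
    (a + Real.sqrt (a^2 + 4*b*(1 + Δ)*(n - Δ - 1))) / (2*(1 + Δ)*((n : ℝ) - Δ - 1)) ≤
      maxEig (distMatrix_isHermitian G) := by
  have hvN := G.notMem_neighborFinset_self v
  have hcard : #(insert v (G.neighborFinset v)) = Δ + 1 := by
    rw [card_insert_of_notMem hvN, G.card_neighborFinset_eq_degree, hv]
  have hΔ0 : (Δ : ℝ) ≠ 0 := by
    have : Nontrivial V := Fintype.one_lt_card_iff_nontrivial.mp (by omega)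
    have := hconn.preconnected.degree_pos_of_nontrivial v
    rw [hv] at this
    positivity
  have hΔn' : (Δ : ℝ) + 2 ≤ n := by exact_mod_cast hΔn
  refine larger_root_le_maxEig (distMatrix_isHermitian G) (insert v (G.neighborFinset v))
    (T := Dv + tv * Δ) (α := 2 * Δ ^ 2) ?_ ?_ (by positivity) (by linarith) hS.symm ?_ ?_ ?_ ?_
  · rw [hcard]; push_cast; ring
  · rw [hcard, ← hn]; push_cast; ring
  · rw [sum_insert hvN, hDv, htv, div_mul_cancel₀ _ hΔ0]
    rfl
  · rw [← hv]
    exact G.two_mul_sq_degree_le_sum_dist hconn hbip v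
  · rw [ha]; ring
  · rw [hb]; ring

theorem stmt2 {V : Type*} [Fintype V] [DecidableEq V] (G : SimpleGraph V) [DecidableRel G.Adj]
    (hconn : G.Connected) (hbip : G.Colorable 2)
    (n : ℕ) (hn : n = Fintype.card V) (hn3 : 3 ≤ n)
    (Δ : ℕ) (hΔ : G.maxDegree = Δ) (hΔn : Δ + 2 ≤ n)
    (S : ℝ) (hS : S = ∑ u, transmission G u)
    (v : V) (hv : G.degree v = Δ)
    (Dv tv a b : ℝ)
    (hDv : Dv = transmission G v)
    (htv : tv = (∑ u ∈ G.neighborFinset v, transmission G u) / Δ)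
    (ha : a = (Δ + 1) * (S - 2*Dv - 2*tv*Δ) + 2*n*Δ^2)
    (hb : b = Dv^2 - 2*S*Δ^2 + 2*Dv*tv*Δ + tv^2*Δ^2) :
    (a + Real.sqrt (a^2 + 4*b*(1 + Δ)*(n - Δ - 1))) / (2*(1 + Δ)*((n : ℝ) - Δ - 1)) ≤
      maxEig (distMatrix_isHermitian G) :=
  stmt2_general G hconn hbip n hn Δ hΔn S hS v hv Dv tv a b hDv htv ha hb
end

section
/- Let G be a connected bipartite simple graph on n ≥ 3 vertices with maximum degree Δ ≤ n−2 and Wiener index W. For every vertex v of G with deg(v) = Δ, putting D_v = Tr_G(v), a = 4(W − D_v − t_v Δ)(Δ+1) + 2nΔ² + nD_v + n t_v Δ and b = 4D_v² + 8 D_v t_v Δ + 4 t_v² Δ² − 8WΔ² − 4W D_v − 4W t_v Δ, the largest distance signless Laplacian eigenvalue satisfies q^𝒟(G) ≥ (a + √(a² + 4b(1+Δ)(n−Δ−1))) / (2(1+Δ)(n−Δ−1)). -/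
open Finset Matrix

/-!
Test the Rayleigh quotient of `𝒬(G)` on vectors taking one value on the closed neighbourhood
`N[v]` (of size `m = Δ + 1`) and another on its complement (of size `k = n - Δ - 1`). With
`σ, C, S` the distance sums over `N[v] × N[v]`, `N[v] × N[v]ᶜ` and `N[v]ᶜ × N[v]ᶜ`, this gives
`α²(2σ + C) + 2αβC + β²(C + 2S) ≤ q (mα² + kβ²)` for all `α, β`, so the 2 × 2 form
`(mq - 2σ - C, -C; -C, kq - C - 2S)` is positive semidefinite. A bipartite graph has no
triangles, so the neighbours of `v` are pairwise at distance 2, whence `σ ≥ 2Δ²`; together with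
the determinant inequality this makes `mk q² - a q - b ≥ 0`, and `q` lies above the larger root.
-/

namespace Matrix

variable {V : Type*}

theorem IsHermitian.dotProduct_mulVec_le_maxEig_mul [Fintype V] [DecidableEq V] {A : Matrix V V ℝ}
    (hA : A.IsHermitian) (x : V → ℝ) :
    x ⬝ᵥ (A *ᵥ x) ≤ maxEig hA * (x ⬝ᵥ x) := by
  have hpsd : (algebraMap ℝ (Matrix V V ℝ) (maxEig hA) - A).PosSemidef := by
    refine posSemidef_iff_isHermitian_and_spectrum_nonneg.mpr
      ⟨(isHermitian_diagonal _).sub hA, ?_⟩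
    rw [← spectrum.singleton_sub_eq, hA.spectrum_real_eq_range_eigenvalues]
    rintro _ ⟨_, rfl, _, ⟨i, rfl⟩, rfl⟩
    exact sub_nonneg.mpr (le_ciSup (Set.finite_range hA.eigenvalues).bddAbove i)
  simpa [sub_mulVec, Algebra.algebraMap_eq_smul_one, smul_mulVec] using
    hpsd.dotProduct_mulVec_nonneg x

def blockSum (A : Matrix V V ℝ) (s t : Finset V) : ℝ :=
  ∑ i ∈ s, ∑ j ∈ t, A i j

theorem blockSum_transpose (A : Matrix V V ℝ) (s t : Finset V) :
    Aᵀ.blockSum s t = A.blockSum t s :=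
  Finset.sum_comm

theorem IsHermitian.blockSum_comm {A : Matrix V V ℝ} (hA : A.IsHermitian) (s t : Finset V) :
    A.blockSum s t = A.blockSum t s := by
  rw [← blockSum_transpose, ← conjTranspose_eq_transpose_of_trivial, hA.eq]

theorem blockSum_add_blockSum_compl [Fintype V] [DecidableEq V] (A : Matrix V V ℝ)
    (s t : Finset V) :
    A.blockSum s t + A.blockSum s tᶜ = ∑ i ∈ s, ∑ j, A i j := by
  simp only [blockSum, ← sum_add_distrib, sum_add_sum_compl]

theorem blockSum_diagonal [DecidableEq V] (d : V → ℝ) (s t : Finset V) :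
    (diagonal d).blockSum s t = ∑ i ∈ s ∩ t, d i := by
  simp only [blockSum, diagonal_apply, sum_ite_eq, sum_ite_mem]

theorem blockSum_one [DecidableEq V] (s t : Finset V) :
    (1 : Matrix V V ℝ).blockSum s t = #(s ∩ t) := by
  simp [← diagonal_one, blockSum_diagonal]

theorem dotProduct_mulVec_ite [Fintype V] [DecidableEq V] (A : Matrix V V ℝ) (s : Finset V)
    (α β : ℝ) :
    (fun i => if i ∈ s then α else β) ⬝ᵥ (A *ᵥ fun i => if i ∈ s then α else β) =
      α ^ 2 * A.blockSum s s + α * β * (A.blockSum s sᶜ + A.blockSum sᶜ s) +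
        β ^ 2 * A.blockSum sᶜ sᶜ := by
  have split : ∀ f : V → ℝ, ∑ i, (if i ∈ s then α else β) * f i =
      α * ∑ i ∈ s, f i + β * ∑ i ∈ sᶜ, f i := by
    intro f
    rw [← sum_add_sum_compl s, mul_sum, mul_sum]
    congr 1 <;> refine sum_congr rfl fun i hi => ?_ <;> simp_all
  simp only [dotProduct, mulVec, mul_comm (A _ _) (ite _ _ _), split]
  simp only [blockSum, sum_add_distrib, ← mul_sum]
  ring

theorem blockSum_quadForm_le [Fintype V] [DecidableEq V] {A : Matrix V V ℝ} (hA : A.IsHermitian)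
    (s : Finset V) (α β : ℝ) :
    α ^ 2 * A.blockSum s s + 2 * α * β * A.blockSum s sᶜ + β ^ 2 * A.blockSum sᶜ sᶜ ≤
      maxEig hA * (#s * α ^ 2 + #sᶜ * β ^ 2) := by
  have hnorm := dotProduct_mulVec_ite 1 s α β
  simp only [one_mulVec, blockSum_one, inter_self, inter_comm sᶜ s, inter_compl, card_empty,
    Nat.cast_zero, add_zero, mul_zero] at hnorm
  have hx := hA.dotProduct_mulVec_le_maxEig_mul fun i => if i ∈ s then α else β
  rw [dotProduct_mulVec_ite, ← hA.blockSum_comm s sᶜ, hnorm] at hx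
  linarith

end Matrix

theorem quadratic_root_le {m k a b θ : ℝ} (hm : 0 < m) (hk : 0 < k) (ha : a ≤ 2 * m * k * θ)
    (hθ : 0 ≤ m * k * θ ^ 2 - a * θ - b) :
    (a + √(a ^ 2 + 4 * b * m * k)) / (2 * m * k) ≤ θ := by
  have hsqrt : √(a ^ 2 + 4 * b * m * k) ≤ 2 * m * k * θ - a :=
    Real.sqrt_le_iff.mpr ⟨by linarith, by nlinarith [mul_nonneg (mul_pos hm hk).le hθ]⟩
  rw [div_le_iff₀ (by positivity)]
  linarith

theorem root_le_of_forall_quadForm_le {θ m k d σ C S W a b : ℝ}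
    (hform : ∀ α β : ℝ, α ^ 2 * (2 * σ + C) + 2 * α * β * C + β ^ 2 * (C + 2 * S) ≤
      θ * (m * α ^ 2 + k * β ^ 2))
    (hm : m = d + 1) (hd : 0 ≤ d) (hk : 1 ≤ k) (hσ : 2 * d ^ 2 ≤ σ)
    (hW : 2 * W = σ + 2 * C + S)
    (ha : a = 4 * (W - (σ + C)) * m + 2 * (m + k) * d ^ 2 + (m + k) * (σ + C))
    (hb : b = 4 * (σ + C) ^ 2 - 4 * W * (σ + C) - 8 * W * d ^ 2) :
    (a + √(a ^ 2 + 4 * b * m * k)) / (2 * m * k) ≤ θ := by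
  have h10 : 2 * σ + C ≤ θ * m := by simpa using hform 1 0
  have h01 : C + 2 * S ≤ θ * k := by simpa using hform 0 1
  have h11 : 4 * W ≤ θ * (m + k) := by linarith [hform 1 1]
  have hdet : C ^ 2 ≤ (m * θ - (2 * σ + C)) * (k * θ - (C + 2 * S)) := by
    have := discrim_le_zero (a := m * θ - (2 * σ + C)) (b := -2 * C) (c := k * θ - (C + 2 * S))
      fun α => by nlinarith [hform α 1]
    rw [discrim] at this
    linarith
  refine quadratic_root_le (by linarith) (by linarith) ?_ ?_
  · have ha' : a = k * (σ + C + 2 * d ^ 2) + m * (C + 2 * S - σ + 2 * d ^ 2) := by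
      rw [ha]; linear_combination 2 * m * hW
    have hm0 : 0 ≤ m := by linarith
    have hk0 : 0 ≤ k := by linarith
    calc a ≤ k * (2 * σ + C) + m * (C + 2 * S) := by
          rw [ha']; gcongr k * ?_ + m * ?_ <;> linarith
      _ ≤ k * (θ * m) + m * (θ * k) := by gcongr
      _ = 2 * m * k * θ := by ring
  · -- `σ - 2d²` and `(m + k)θ - 4W` are the slacks in `hσ` and `h11`
    have key : m * k * θ ^ 2 - a * θ - b = (m * θ - (2 * σ + C)) * (k * θ - (C + 2 * S)) - C ^ 2
        + (σ - 2 * d ^ 2) * ((m + k) * θ - 4 * W) := by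
      obtain rfl : S = 2 * W - σ - 2 * C := by linarith
      subst ha hb hm
      ring
    rw [key]
    nlinarith [mul_nonneg (sub_nonneg.mpr hσ) (by linarith : 0 ≤ (m + k) * θ - 4 * W)]

namespace SimpleGraph

variable {V : Type*} (G : SimpleGraph V)

theorem two_le_dist_of_adj_of_adj_s6 (hG : G.CliqueFree 3) {v u w : V} (hu : G.Adj v u)
    (hw : G.Adj v w) (huw : u ≠ w) : 2 ≤ G.dist u w :=
  (hu.symm.reachable.trans hw.reachable).one_lt_dist_of_ne_of_not_adj huw
    (G.isIndepSet_neighborSet_of_triangleFree hG v hu hw huw)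

variable [Fintype V] [DecidableEq V] [DecidableRel G.Adj]

theorem two_mul_degree_sub_one_le_sum_dist (hG : G.CliqueFree 3) {v u : V} (hu : G.Adj v u) :
    2 * (G.degree v - 1) ≤ ∑ w ∈ G.neighborFinset v, G.dist u w := by
  rw [← sum_erase _ G.dist_self, ← card_neighborFinset_eq_degree,
    ← card_erase_of_mem ((G.mem_neighborFinset v u).2 hu), mul_comm, ← smul_eq_mul]
  exact card_nsmul_le_sum _ _ 2 fun w hw =>
    G.two_le_dist_of_adj_of_adj_s6 hG hu ((G.mem_neighborFinset v w).1 (mem_of_mem_erase hw))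
      (ne_of_mem_erase hw).symm

theorem two_mul_degree_sq_le_sum_dist (hG : G.CliqueFree 3) (v : V) :
    2 * G.degree v ^ 2 ≤ ∑ u ∈ insert v (G.neighborFinset v),
      ∑ w ∈ insert v (G.neighborFinset v), G.dist u w := by
  have hv : v ∉ G.neighborFinset v := G.notMem_neighborFinset_self v
  have hrow_v : ∑ w ∈ insert v (G.neighborFinset v), G.dist v w = G.degree v := by
    rw [sum_insert hv, dist_self, zero_add, ← card_neighborFinset_eq_degree, card_eq_sum_ones]
    exact sum_congr rfl fun w hw => dist_eq_one_iff_adj.2 ((G.mem_neighborFinset v w).1 hw)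
  have hrow : ∀ u ∈ G.neighborFinset v,
      1 + 2 * (G.degree v - 1) ≤ ∑ w ∈ insert v (G.neighborFinset v), G.dist u w := by
    intro u hu
    have hvu := (G.mem_neighborFinset v u).1 hu
    rw [sum_insert hv, dist_comm, dist_eq_one_iff_adj.2 hvu]
    exact Nat.add_le_add_left (G.two_mul_degree_sub_one_le_sum_dist hG hvu) 1
  calc 2 * G.degree v ^ 2 = G.degree v + G.degree v * (1 + 2 * (G.degree v - 1)) := by
        rcases G.degree v with _ | d
        · rfl
        · rw [Nat.add_sub_cancel]; ring
    _ ≤ _ := by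
      rw [sum_insert hv, hrow_v, ← card_neighborFinset_eq_degree G v, ← smul_eq_mul, ← sum_const,
        card_neighborFinset_eq_degree]
      exact Nat.add_le_add_left (sum_le_sum hrow) _

end SimpleGraph

section Blocks

variable {V : Type*} [Fintype V] [DecidableEq V] (G : SimpleGraph V)

theorem blockSum_distSLMatrix (s t : Finset V) :
    (distSLMatrix G).blockSum s t =
      ∑ u ∈ s ∩ t, transmission G u + (distMatrix G).blockSum s t := by
  rw [← Matrix.blockSum_diagonal]
  simp only [Matrix.blockSum, distSLMatrix, Matrix.add_apply, sum_add_distrib]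

theorem sum_transmission_eq_blockSum_add (s t : Finset V) :
    ∑ u ∈ s, transmission G u = (distMatrix G).blockSum s t + (distMatrix G).blockSum s tᶜ := by
  rw [Matrix.blockSum_add_blockSum_compl]
  rfl

theorem sum_transmission_compl (s : Finset V) :
    ∑ u ∈ sᶜ, transmission G u =
      (distMatrix G).blockSum s sᶜ + (distMatrix G).blockSum sᶜ sᶜ := by
  rw [sum_transmission_eq_blockSum_add G sᶜ s, (distMatrix_isHermitian G).blockSum_comm sᶜ s]

theorem sum_transmission_eq_blockSum (s : Finset V) :
    ∑ u, transmission G u = (distMatrix G).blockSum s s + 2 * (distMatrix G).blockSum s sᶜ +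
      (distMatrix G).blockSum sᶜ sᶜ := by
  rw [← sum_add_sum_compl s, sum_transmission_eq_blockSum_add G s s, sum_transmission_compl]
  ring

theorem distSLMatrix_quadForm_le (s : Finset V) (α β : ℝ) :
    α ^ 2 * (2 * (distMatrix G).blockSum s s + (distMatrix G).blockSum s sᶜ) +
        2 * α * β * (distMatrix G).blockSum s sᶜ +
        β ^ 2 * ((distMatrix G).blockSum s sᶜ + 2 * (distMatrix G).blockSum sᶜ sᶜ) ≤
      maxEig (distSLMatrix_isHermitian G) * (#s * α ^ 2 + #sᶜ * β ^ 2) := by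
  have h := Matrix.blockSum_quadForm_le (distSLMatrix_isHermitian G) s α β
  rw [blockSum_distSLMatrix, blockSum_distSLMatrix, blockSum_distSLMatrix, inter_self, inter_self,
    inter_compl, sum_empty, zero_add, sum_transmission_eq_blockSum_add G s s,
    sum_transmission_compl] at h
  linarith

theorem two_mul_degree_sq_le_blockSum_distMatrix [DecidableRel G.Adj] (hG : G.CliqueFree 3)
    (v : V) :
    2 * (G.degree v : ℝ) ^ 2 ≤
      (distMatrix G).blockSum (insert v (G.neighborFinset v)) (insert v (G.neighborFinset v)) := by
  simp only [Matrix.blockSum, distMatrix, Matrix.of_apply]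
  exact_mod_cast G.two_mul_degree_sq_le_sum_dist hG v

end Blocks

theorem stmt6_general {V : Type*} [Fintype V] [DecidableEq V] (G : SimpleGraph V) [DecidableRel G.Adj]
    (hbip : G.Colorable 2)
    (n : ℕ) (hn : n = Fintype.card V)
    (Δ : ℕ) (hΔn : Δ + 2 ≤ n)
    (W : ℝ) (hW : W = (∑ u, transmission G u) / 2)
    (v : V) (hv : G.degree v = Δ)
    (Dv tv a b : ℝ)
    (hDv : Dv = transmission G v)
    (htv : tv = (∑ u ∈ G.neighborFinset v, transmission G u) / Δ)
    (ha : a = 4*(W - Dv - tv*Δ)*(Δ + 1) + 2*n*Δ^2 + n*Dv + n*tv*Δ)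
    (hb : b = 4*Dv^2 + 8*Dv*tv*Δ + 4*tv^2*Δ^2 - 8*W*Δ^2 - 4*W*Dv - 4*W*tv*Δ) :
    (a + Real.sqrt (a^2 + 4*b*(1 + Δ)*(n - Δ - 1))) / (2*(1 + Δ)*((n : ℝ) - Δ - 1)) ≤
      maxEig (distSLMatrix_isHermitian G) := by
  set s := insert v (G.neighborFinset v)
  have hvs : v ∉ G.neighborFinset v := G.notMem_neighborFinset_self v
  have hcard : #s = Δ + 1 := by
    rw [card_insert_of_notMem hvs, G.card_neighborFinset_eq_degree, hv]
  have hs : (#s : ℝ) = 1 + Δ := by rw [hcard]; push_cast; ring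
  have hsc : (#sᶜ : ℝ) = n - Δ - 1 := by
    rw [card_compl, ← hn, hcard, Nat.cast_sub (by omega)]; push_cast; ring
  have hk : (1 : ℝ) ≤ n - Δ - 1 := by
    have : (Δ : ℝ) + 2 ≤ n := by exact_mod_cast hΔn
    linarith
  -- `tv` is the junk value `0` when `Δ = 0`, but then the neighbourhood is empty anyway.
  have hT : Dv + tv * Δ = (distMatrix G).blockSum s s + (distMatrix G).blockSum s sᶜ := by
    rw [← sum_transmission_eq_blockSum_add, sum_insert hvs, hDv, htv, div_mul_cancel_of_imp]
    intro hΔ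
    have hN : G.neighborFinset v = ∅ := by
      rw [← card_eq_zero, G.card_neighborFinset_eq_degree, hv]; exact_mod_cast hΔ
    rw [hN, sum_empty]
  have hσ := two_mul_degree_sq_le_blockSum_distMatrix G (hbip.cliqueFree (by norm_num)) v
  rw [hv] at hσ
  have hWsum : 2 * W = (distMatrix G).blockSum s s + 2 * (distMatrix G).blockSum s sᶜ +
      (distMatrix G).blockSum sᶜ sᶜ := by
    rw [hW, sum_transmission_eq_blockSum G s]; ring
  refine root_le_of_forall_quadForm_le (fun α β => ?_) (add_comm 1 _) (Nat.cast_nonneg Δ) hk hσ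
    hWsum (by rw [ha, ← hT]; ring) (by rw [hb, ← hT]; ring)
  simpa only [hs, hsc] using distSLMatrix_quadForm_le G s α β

theorem stmt6 {V : Type*} [Fintype V] [DecidableEq V] (G : SimpleGraph V) [DecidableRel G.Adj]
    (hconn : G.Connected) (hbip : G.Colorable 2)
    (n : ℕ) (hn : n = Fintype.card V) (hn3 : 3 ≤ n)
    (Δ : ℕ) (hΔ : G.maxDegree = Δ) (hΔn : Δ + 2 ≤ n)
    (W : ℝ) (hW : W = (∑ u, transmission G u) / 2)
    (v : V) (hv : G.degree v = Δ)
    (Dv tv a b : ℝ)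
    (hDv : Dv = transmission G v)
    (htv : tv = (∑ u ∈ G.neighborFinset v, transmission G u) / Δ)
    (ha : a = 4*(W - Dv - tv*Δ)*(Δ + 1) + 2*n*Δ^2 + n*Dv + n*tv*Δ)
    (hb : b = 4*Dv^2 + 8*Dv*tv*Δ + 4*tv^2*Δ^2 - 8*W*Δ^2 - 4*W*Dv - 4*W*tv*Δ) :
    (a + Real.sqrt (a^2 + 4*b*(1 + Δ)*(n - Δ - 1))) / (2*(1 + Δ)*((n : ℝ) - Δ - 1)) ≤
      maxEig (distSLMatrix_isHermitian G) :=
  stmt6_general G hbip n hn Δ hΔn W hW v hv Dv tv a b hDv htv ha hb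
end

section
/- Let G be a connected bipartite simple graph on n ≥ 3 vertices with maximum degree Δ ≤ n−2 and Wiener index W. For every vertex v of G with deg(v) = Δ, putting D_v = Tr_G(v), a = 4(W − D_v − t_v Δ)(Δ+1) + 2nΔ² + nD_v + n t_v Δ and b = 4D_v² + 8 D_v t_v Δ + 4 t_v² Δ² − 8WΔ² − 4W D_v − 4W t_v Δ, the least distance signless Laplacian eigenvalue satisfies q^𝒟_min(G) ≤ (a + √(a² + 4b(1+Δ)(n−Δ−1))) / (2(1+Δ)(n−Δ−1)). -/
open Finset Matrix

/-! Evaluate the Rayleigh quotient of `distSLMatrix G` at the indicator vector of the closed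
neighbourhood `N[v]`. A bipartite graph is triangle-free, so inside `N[v]` the distances are `1`
from `v` and `2` between distinct neighbours; the quotient is
`p = (Dv + tv Δ + 2 Δ²) / (Δ + 1)`. At `x = p` the quadratic `(1 + Δ)(n - Δ - 1) x² - a x - b`
equals `-(Dv + tv Δ - 2 Δ²)² ≤ 0`, so `p` is at most its larger root. -/

theorem minEig_mul_dotProduct_self_le {n : Type*} [Fintype n] [DecidableEq n]
    {A : Matrix n n ℝ} (hA : A.IsHermitian) (x : n → ℝ) :
    minEig hA * (x ⬝ᵥ x) ≤ x ⬝ᵥ (A *ᵥ x) := by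
  have hB : (A - algebraMap ℝ (Matrix n n ℝ) (minEig hA)).IsHermitian :=
    hA.sub (isHermitian_diagonal _)
  have hpsd : (A - algebraMap ℝ (Matrix n n ℝ) (minEig hA)).PosSemidef := by
    rw [hB.posSemidef_iff_eigenvalues_nonneg]
    intro i
    have hi := hB.eigenvalues_mem_spectrum_real i
    rw [← spectrum.sub_singleton_eq, hA.spectrum_real_eq_range_eigenvalues] at hi
    obtain ⟨_, ⟨j, rfl⟩, _, rfl, hj⟩ := hi
    rw [Pi.zero_apply, ← hj, sub_nonneg]
    exact ciInf_le (Set.finite_range _).bddBelow j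
  simpa [sub_mulVec, dotProduct_sub, Algebra.algebraMap_eq_smul_one, smul_mulVec,
    dotProduct_smul] using hpsd.dotProduct_mulVec_nonneg x

theorem minEig_mul_card_le_sum_sum {n : Type*} [Fintype n] [DecidableEq n]
    {A : Matrix n n ℝ} (hA : A.IsHermitian) (s : Finset n) :
    minEig hA * #s ≤ ∑ i ∈ s, ∑ j ∈ s, A i j := by
  simpa [dotProduct, mulVec, Set.indicator_apply, ← sum_filter, sum_comm] using
    minEig_mul_dotProduct_self_le hA ((s : Set n).indicator 1)

theorem le_div_of_quadratic_nonpos {a b c p : ℝ} (hc : 0 < c) (hp : c * p ^ 2 - a * p - b ≤ 0) :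
    p ≤ (a + √(a ^ 2 + 4 * b * c)) / (2 * c) := by
  rw [le_div_iff₀ (by positivity), mul_comm, ← sub_le_iff_le_add']
  refine (le_abs_self _).trans (Real.abs_le_sqrt ?_)
  nlinarith

namespace SimpleGraph

variable {V : Type*} {G : SimpleGraph V}

theorem dist_eq_two_of_adj_of_adj (hG : G.CliqueFree 3) {u v w : V} (hu : G.Adj v u)
    (hw : G.Adj v w) (hne : u ≠ w) : G.dist u w = 2 := by
  have hnadj : ¬ G.Adj u w := isIndepSet_neighborSet_of_triangleFree G hG v hu hw hne
  have h2 : G.edist u w = 2 :=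
    G.edist_eq_two_iff.mpr ⟨hne, hnadj, v, G.mem_commonNeighbors.mpr ⟨hu.symm, hw.symm⟩⟩
  rw [SimpleGraph.dist, h2]
  rfl

variable [Fintype V] [DecidableEq V]

theorem sum_dist_insert_neighborFinset_of_adj [DecidableRel G.Adj] (hG : G.CliqueFree 3)
    {u v : V} (huv : G.Adj v u) :
    ∑ w ∈ insert v (G.neighborFinset v), G.dist u w = 1 + 2 * (G.degree v - 1) := by
  have hu : u ∈ G.neighborFinset v := (G.mem_neighborFinset v u).mpr huv
  rw [sum_insert (G.notMem_neighborFinset_self v), dist_comm, dist_eq_one_iff_adj.mpr huv,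
    ← add_sum_erase _ _ hu, dist_self, zero_add,
    sum_congr rfl fun w hw => dist_eq_two_of_adj_of_adj hG huv
      ((G.mem_neighborFinset v w).mp (mem_of_mem_erase hw)) (ne_of_mem_erase hw).symm,
    sum_const, card_erase_of_mem hu, card_neighborFinset_eq_degree, smul_eq_mul, mul_comm]

theorem sum_sum_dist_insert_neighborFinset [DecidableRel G.Adj] (hG : G.CliqueFree 3) (v : V) :
    ∑ u ∈ insert v (G.neighborFinset v), ∑ w ∈ insert v (G.neighborFinset v), G.dist u w =
      2 * G.degree v ^ 2 := by
  have hv : ∑ w ∈ G.neighborFinset v, G.dist v w = G.degree v := by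
    rw [sum_congr rfl fun w hw => dist_eq_one_iff_adj.mpr ((G.mem_neighborFinset v w).mp hw),
      sum_const, card_neighborFinset_eq_degree, smul_eq_mul, mul_one]
  rw [sum_insert (G.notMem_neighborFinset_self v), sum_insert (G.notMem_neighborFinset_self v),
    dist_self, zero_add, hv,
    sum_congr rfl fun u hu => sum_dist_insert_neighborFinset_of_adj hG
      ((G.mem_neighborFinset v u).mp hu),
    sum_const, card_neighborFinset_eq_degree, smul_eq_mul]
  rcases G.degree v with _ | d
  · rfl
  · simp only [Nat.add_sub_cancel]
    ring

theorem sum_sum_distSLMatrix (G : SimpleGraph V) (s : Finset V) :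
    ∑ u ∈ s, ∑ w ∈ s, distSLMatrix G u w =
      ∑ u ∈ s, transmission G u + ∑ u ∈ s, ∑ w ∈ s, (G.dist u w : ℝ) := by
  simp [distSLMatrix, distMatrix, diagonal_apply, sum_add_distrib]

theorem minEig_distSLMatrix_mul_le [DecidableRel G.Adj] (hG : G.CliqueFree 3) (v : V) :
    minEig (distSLMatrix_isHermitian G) * (G.degree v + 1) ≤
      transmission G v + ∑ u ∈ G.neighborFinset v, transmission G u + 2 * G.degree v ^ 2 := by
  have hdist : ∑ u ∈ insert v (G.neighborFinset v), ∑ w ∈ insert v (G.neighborFinset v),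
      (G.dist u w : ℝ) = 2 * G.degree v ^ 2 := by
    exact_mod_cast sum_sum_dist_insert_neighborFinset hG v
  have h := minEig_mul_card_le_sum_sum (distSLMatrix_isHermitian G)
    (insert v (G.neighborFinset v))
  rw [sum_sum_distSLMatrix, hdist, sum_insert (G.notMem_neighborFinset_self v),
    card_insert_of_notMem (G.notMem_neighborFinset_self v), card_neighborFinset_eq_degree] at h
  exact_mod_cast h

end SimpleGraph

theorem stmt7_general {V : Type*} [Fintype V] [DecidableEq V] (G : SimpleGraph V) [DecidableRel G.Adj]
    (hbip : G.Colorable 2)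
    (n : ℕ)
    (Δ : ℕ) (hΔn : Δ + 2 ≤ n)
    (W : ℝ)
    (v : V) (hv : G.degree v = Δ)
    (Dv tv a b : ℝ)
    (hDv : Dv = transmission G v)
    (htv : tv = (∑ u ∈ G.neighborFinset v, transmission G u) / Δ)
    (ha : a = 4*(W - Dv - tv*Δ)*(Δ + 1) + 2*n*Δ^2 + n*Dv + n*tv*Δ)
    (hb : b = 4*Dv^2 + 8*Dv*tv*Δ + 4*tv^2*Δ^2 - 8*W*Δ^2 - 4*W*Dv - 4*W*tv*Δ) :
    minEig (distSLMatrix_isHermitian G) ≤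
      (a + Real.sqrt (a^2 + 4*b*(1 + Δ)*(n - Δ - 1))) / (2*(1 + Δ)*((n : ℝ) - Δ - 1)) := by
  -- when `Δ = 0`, `tv` is the junk value `_ / 0 = 0`, but the neighbourhood is empty
  have hnbhd : ∑ u ∈ G.neighborFinset v, transmission G u = tv * Δ := by
    rcases eq_or_ne Δ 0 with rfl | hΔ
    · have hN : G.neighborFinset v = ∅ :=
        card_eq_zero.mp (by rw [G.card_neighborFinset_eq_degree, hv])
      simp [hN]
    · rw [htv, div_mul_cancel₀ _ (by exact_mod_cast hΔ)]
  have hray := G.minEig_distSLMatrix_mul_le (hbip.cliqueFree (by norm_num)) v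
  rw [hv, ← hDv, hnbhd] at hray
  have hc : 0 < (1 + (Δ : ℝ)) * (n - Δ - 1) := by
    have : (Δ : ℝ) + 2 ≤ n := by exact_mod_cast hΔn
    exact mul_pos (by positivity) (by linarith)
  set p := (Dv + tv * Δ + 2 * Δ ^ 2) / (Δ + 1) with hp
  have hquad : (1 + Δ) * (n - Δ - 1) * p ^ 2 - a * p - b = -(Dv + tv * Δ - 2 * Δ ^ 2) ^ 2 := by
    rw [hp, ha, hb]
    field_simp
    ring
  calc minEig (distSLMatrix_isHermitian G) ≤ p := by
        rw [hp, le_div_iff₀ (by positivity)]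
        linarith
    _ ≤ _ := by
        have h := le_div_of_quadratic_nonpos hc (hquad.trans_le (neg_nonpos.mpr (sq_nonneg _)))
        simp only [mul_assoc] at h ⊢
        exact h

theorem stmt7 {V : Type*} [Fintype V] [DecidableEq V] (G : SimpleGraph V) [DecidableRel G.Adj]
    (hconn : G.Connected) (hbip : G.Colorable 2)
    (n : ℕ) (hn : n = Fintype.card V) (hn3 : 3 ≤ n)
    (Δ : ℕ) (hΔ : G.maxDegree = Δ) (hΔn : Δ + 2 ≤ n)
    (W : ℝ) (hW : W = (∑ u, transmission G u) / 2)
    (v : V) (hv : G.degree v = Δ)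
    (Dv tv a b : ℝ)
    (hDv : Dv = transmission G v)
    (htv : tv = (∑ u ∈ G.neighborFinset v, transmission G u) / Δ)
    (ha : a = 4*(W - Dv - tv*Δ)*(Δ + 1) + 2*n*Δ^2 + n*Dv + n*tv*Δ)
    (hb : b = 4*Dv^2 + 8*Dv*tv*Δ + 4*tv^2*Δ^2 - 8*W*Δ^2 - 4*W*Dv - 4*W*tv*Δ) :
    minEig (distSLMatrix_isHermitian G) ≤
      (a + Real.sqrt (a^2 + 4*b*(1 + Δ)*(n - Δ - 1))) / (2*(1 + Δ)*((n : ℝ) - Δ - 1)) :=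
  stmt7_general G hbip n Δ hΔn W v hv Dv tv a b hDv htv ha hb
end

section
/- Let a, b ≥ 1 be integers and n = a + b. The multiset of eigenvalues of the distance signless Laplacian 𝒬(K_{a,b}) of the complete bipartite graph K_{a,b} consists of 2n−a−4 with multiplicity b−1, 2n−b−4 with multiplicity a−1, together with the two eigenvalues (5n−8+√(9n²−32ab))/2 and (5n−8−√(9n²−32ab))/2. -/
/-!
Off the diagonal, the distance between two vertices of `K_{a,b}` is 2 or 1 according as they lie
on the same side or not, and the transmission is constant on each side. So
`𝒬 = diag(c ∘ side) + W.submatrix side side` with `c = (2a+b-4, a+2b-4)` and `W = [[2,1],[1,2]]`.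
For `t ∉ {c₀, c₁}` the matrix determinant lemma reduces `det (t - 𝒬)` to a `2 × 2` determinant,
giving `(t - c₀)^(a-1) (t - c₁)^(b-1) ((t - c₀ - 2a)(t - c₁ - 2b) - ab)`, whose quadratic factor
has discriminant `9n² - 32ab`. Agreement at infinitely many `t` identifies the characteristic
polynomial, hence the eigenvalues.
-/

open Finset Matrix

open Polynomial

theorem Matrix.det_diagonal_comp_sub_submatrix {K ι κ : Type*} [Field K] [Fintype ι]
    [DecidableEq ι] [Fintype κ] [DecidableEq κ] (f : ι → κ) (d : κ → K)
    (hd : ∀ i, d (f i) ≠ 0) (M : Matrix κ κ K) :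
    (diagonal (d ∘ f) - M.submatrix f f).det =
      (∏ i, d (f i)) * (1 - diagonal (fun k => (#{i | f i = k} : K) / d k) * M).det := by
  -- `P` is the incidence matrix of `f`; `det (1 - X Y) = det (1 - Y X)` moves the problem to `κ`.
  set P : Matrix ι κ K := of fun i k => if f i = k then 1 else 0
  set Dinv : Matrix ι ι K := diagonal fun i => (d (f i))⁻¹
  have hsub : M.submatrix f f = P * M * Pᵀ := by
    ext i j
    simp [P, mul_apply, ite_mul]
  have hquot : Pᵀ * Dinv * P = diagonal fun k => (#{i | f i = k} : K) / d k := by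
    ext k l
    simp only [P, Dinv, mul_apply, transpose_apply, of_apply, diagonal_apply, ite_mul, one_mul,
      zero_mul, mul_ite, mul_one, mul_zero, sum_ite_eq', mem_univ, if_true]
    split_ifs with hkl
    · subst hkl
      simp only [← ite_and, and_self]
      rw [sum_ite, sum_const_zero, add_zero, sum_congr rfl fun i hi => by rw [(mem_filter.mp hi).2]]
      simp [div_eq_mul_inv]
    · exact sum_eq_zero fun i _ => by split_ifs <;> simp_all
  have hfactor :
      diagonal (d ∘ f) - M.submatrix f f = diagonal (d ∘ f) * (1 - Dinv * (P * M) * Pᵀ) := by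
    rw [Matrix.mul_sub, Matrix.mul_one, ← Matrix.mul_assoc, ← Matrix.mul_assoc,
      diagonal_mul_diagonal, hsub]
    simp [hd, Matrix.mul_assoc]
  rw [hfactor, det_mul, det_one_sub_mul_comm, det_diagonal, ← hquot]
  simp only [Matrix.mul_assoc, Function.comp_apply]

theorem Matrix.IsHermitian.map_eigenvalues_eq_of_det_eq {ι : Type*} [Fintype ι] [DecidableEq ι]
    {A : Matrix ι ι ℝ} (hA : A.IsHermitian) (u : Multiset ℝ) {s : Set ℝ} (hs : s.Finite)
    (hdet : ∀ t ∉ s, (scalar ι t - A).det = (u.map (t - ·)).prod) :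
    univ.val.map hA.eigenvalues = u := by
  have hcharpoly : A.charpoly = (u.map (X - C ·)).prod := by
    refine Polynomial.eq_of_infinite_eval_eq _ _ (hs.infinite_compl.mono fun t ht => ?_)
    rw [Set.mem_ofPred_eq, eval_charpoly, hdet t ht, eval_multiset_prod, Multiset.map_map]
    simp
  simpa [hcharpoly] using hA.roots_charpoly_eq_eigenvalues.symm

theorem sub_mul_sub_sub_eq_mul_of_discrim {p q r D : ℝ} (hD : (p - q) ^ 2 + 4 * r = D)
    (hD₀ : 0 ≤ D) (t : ℝ) :
    (t - p) * (t - q) - r = (t - (p + q + √D) / 2) * (t - (p + q - √D) / 2) := by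
  linear_combination (1 / 4 : ℝ) * Real.sq_sqrt hD₀ - (1 / 4 : ℝ) * hD

namespace SimpleGraph

variable {V : Type*} {G : SimpleGraph V}

theorem dist_eq_two_iff {u v : V} :
    G.dist u v = 2 ↔ u ≠ v ∧ ¬G.Adj u v ∧ (G.commonNeighbors u v).Nonempty := by
  rw [dist, ENat.toNat_eq_iff two_ne_zero, ← edist_eq_two_iff]
  rfl

variable {α β : Type*}

theorem completeBipartiteGraph_adj_iff_isLeft_ne {u v : α ⊕ β} :
    (completeBipartiteGraph α β).Adj u v ↔ u.isLeft ≠ v.isLeft := by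
  cases u <;> cases v <;> simp

theorem completeBipartiteGraph_dist [DecidableEq α] [DecidableEq β] [Nonempty α] [Nonempty β]
    (u v : α ⊕ β) :
    (completeBipartiteGraph α β).dist u v =
      if u = v then 0 else if u.isLeft = v.isLeft then 2 else 1 := by
  split_ifs with huv hside
  · rw [huv, dist_self]
  · obtain ⟨w, hw⟩ : ∃ w : α ⊕ β, w.isLeft ≠ u.isLeft := by
      cases u
      · exact ⟨.inr (Classical.arbitrary β), by simp⟩
      · exact ⟨.inl (Classical.arbitrary α), by simp⟩
    refine dist_eq_two_iff.mpr ⟨huv, ?_, w, ?_⟩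
    · rw [completeBipartiteGraph_adj_iff_isLeft_ne, hside]
      exact fun h => h rfl
    · rw [mem_commonNeighbors, completeBipartiteGraph_adj_iff_isLeft_ne,
        completeBipartiteGraph_adj_iff_isLeft_ne, ← hside]
      exact ⟨hw.symm, hw.symm⟩
  · rwa [dist_eq_one_iff_adj, completeBipartiteGraph_adj_iff_isLeft_ne]

variable [Fintype α] [Fintype β]

theorem transmission_completeBipartiteGraph_inl [Nonempty β] (i : α) :
    transmission (completeBipartiteGraph α β) (.inl i) =
      2 * Fintype.card α + Fintype.card β - 2 := by
  classical
  have : Nonempty α := ⟨i⟩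
  rw [transmission, Fintype.sum_sum_type]
  simp [completeBipartiteGraph_dist, sum_ite, filter_ne, Nat.cast_pred Fintype.card_pos]
  ring

theorem transmission_completeBipartiteGraph_inr [Nonempty α] (j : β) :
    transmission (completeBipartiteGraph α β) (.inr j) =
      Fintype.card α + 2 * Fintype.card β - 2 := by
  classical
  have : Nonempty β := ⟨j⟩
  rw [transmission, Fintype.sum_sum_type]
  simp [completeBipartiteGraph_dist, sum_ite, filter_ne, Nat.cast_pred Fintype.card_pos]
  ring

end SimpleGraph

namespace CompleteBipartite

variable (α β : Type*)

def side : α ⊕ β → Fin 2 := Sum.elim (fun _ => 0) (fun _ => 1)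

def distPattern : Matrix (Fin 2) (Fin 2) ℝ := !![2, 1; 1, 2]

variable [Fintype α] [Fintype β]

-- The transmission on each side, minus the diagonal entry 2 of `distPattern`.
noncomputable def shift : Fin 2 → ℝ :=
  ![2 * Fintype.card α + Fintype.card β - 4, Fintype.card α + 2 * Fintype.card β - 4]

theorem card_side_eq_zero : #{u | side α β u = 0} = Fintype.card α := by
  rw [card_filter, Fintype.sum_sum_type]
  simp [side]

theorem card_side_eq_one : #{u | side α β u = 1} = Fintype.card β := by
  rw [card_filter, Fintype.sum_sum_type]
  simp [side]

variable [DecidableEq α] [DecidableEq β] [Nonempty α] [Nonempty β]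

theorem distSLMatrix_eq :
    distSLMatrix (completeBipartiteGraph α β) =
      diagonal (shift α β ∘ side α β) + distPattern.submatrix (side α β) (side α β) := by
  ext u v
  rw [distSLMatrix, Matrix.add_apply, Matrix.add_apply, distMatrix, of_apply,
    SimpleGraph.completeBipartiteGraph_dist]
  obtain rfl | huv := eq_or_ne u v
  · rcases u with i | j
    · simp [SimpleGraph.transmission_completeBipartiteGraph_inl, shift, side, distPattern]
      ring
    · simp [SimpleGraph.transmission_completeBipartiteGraph_inr, shift, side, distPattern]
      ring
  · rw [diagonal_apply_ne _ huv, diagonal_apply_ne _ huv, if_neg huv]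
    rcases u with i | j <;> rcases v with i' | j' <;> simp [side, distPattern]

theorem det_scalar_sub_distSLMatrix {t : ℝ} (h₀ : t ≠ shift α β 0) (h₁ : t ≠ shift α β 1) :
    (scalar _ t - distSLMatrix (completeBipartiteGraph α β)).det =
      (t - shift α β 0) ^ (Fintype.card α - 1) * (t - shift α β 1) ^ (Fintype.card β - 1) *
        ((t - shift α β 0 - 2 * Fintype.card α) * (t - shift α β 1 - 2 * Fintype.card β) -
          Fintype.card α * Fintype.card β) := by
  have hsplit : scalar _ t - distSLMatrix (completeBipartiteGraph α β) =
      diagonal ((t - shift α β ·) ∘ side α β) - distPattern.submatrix (side α β) (side α β) := by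
    rw [distSLMatrix_eq, scalar_apply, sub_add_eq_sub_sub, diagonal_sub]
    rfl
  have hx : t - shift α β 0 ≠ 0 := sub_ne_zero.mpr h₀
  have hy : t - shift α β 1 ≠ 0 := sub_ne_zero.mpr h₁
  have hne : ∀ u, t - shift α β (side α β u) ≠ 0 := by
    rintro (i | j)
    exacts [hx, hy]
  have hquot :
      1 - diagonal (fun k => (#{u | side α β u = k} : ℝ) / (t - shift α β k)) * distPattern =
        !![1 - 2 * Fintype.card α / (t - shift α β 0), -(Fintype.card α / (t - shift α β 0));
          -(Fintype.card β / (t - shift α β 1)), 1 - 2 * Fintype.card β / (t - shift α β 1)] := by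
    ext k l
    fin_cases k <;> fin_cases l <;> simp [distPattern, card_side_eq_zero, card_side_eq_one] <;> ring
  rw [hsplit, det_diagonal_comp_sub_submatrix (side α β) (t - shift α β ·) hne, hquot,
    det_fin_two_of, Fintype.prod_sum_type]
  simp only [side, Sum.elim_inl, Sum.elim_inr, prod_const, card_univ]
  rw [← pow_sub_one_mul Fintype.card_ne_zero (t - shift α β 0),
    ← pow_sub_one_mul Fintype.card_ne_zero (t - shift α β 1)]
  field_simp

end CompleteBipartite

theorem stmt9 (a b : ℕ) (ha : 1 ≤ a) (hb : 1 ≤ b) (n : ℕ) (hn : n = a + b) :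
    Multiset.map (distSLMatrix_isHermitian (completeBipartiteGraph (Fin a) (Fin b))).eigenvalues
        Finset.univ.val =
      Multiset.replicate (b - 1) (2*(n : ℝ) - a - 4) +
      Multiset.replicate (a - 1) (2*(n : ℝ) - b - 4) +
        {(5*(n : ℝ) - 8 + Real.sqrt (9*(n : ℝ)^2 - 32*a*b)) / 2,
         (5*(n : ℝ) - 8 - Real.sqrt (9*(n : ℝ)^2 - 32*a*b)) / 2} := by
  subst hn
  have : Nonempty (Fin a) := ⟨⟨0, ha⟩⟩
  have : Nonempty (Fin b) := ⟨⟨0, hb⟩⟩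
  refine (distSLMatrix_isHermitian _).map_eigenvalues_eq_of_det_eq _
    (s := {CompleteBipartite.shift (Fin a) (Fin b) 0, CompleteBipartite.shift (Fin a) (Fin b) 1})
    (Set.toFinite _) fun t ht => ?_
  simp only [Set.mem_insert_iff, Set.mem_singleton_iff, not_or] at ht
  have hfactor := sub_mul_sub_sub_eq_mul_of_discrim (p := 4 * a + b - 4) (q := a + 4 * b - 4)
    (r := a * b) (D := 9 * ((a + b : ℕ) : ℝ) ^ 2 - 32 * a * b) (by push_cast; ring)
    (by push_cast; nlinarith [sq_nonneg ((a : ℝ) - b)]) t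
  rw [CompleteBipartite.det_scalar_sub_distSLMatrix _ _ ht.1 ht.2]
  simp only [CompleteBipartite.shift, Fintype.card_fin, cons_val_zero, cons_val_one,
    cons_val_fin_one, Nat.cast_add] at hfactor ⊢
  simp only [Multiset.insert_eq_cons, Multiset.add_cons, Multiset.map_cons, Multiset.map_add,
    Multiset.map_replicate, Multiset.map_singleton, Multiset.prod_cons, Multiset.prod_add,
    Multiset.prod_replicate, Multiset.prod_singleton]
  linear_combination (t - (2 * a + b - 4)) ^ (a - 1) * (t - (a + 2 * b - 4)) ^ (b - 1) * hfactor
end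

section
/- Let n ≥ 4 and a be integers with 2 ≤ a ≤ n/2. Then the least eigenvalue of the distance signless Laplacian of the complete bipartite graph K_{a,n−a} is q^𝒟_min(K_{a,n−a}) = n + a − 4. -/
open Finset Matrix

/-! On `K_{a,b}` the distance is `1 + [u, v on the same side] - 2 [u = v]`, so with `s_A`, `s_B` the
sums of `x` over the two sides the quadratic form of `𝒬` is
`(2a+b-4) ∑_A x² + (a+2b-4) ∑_B x² + s_A² + s_B² + (s_A + s_B)²`.
For `a ≤ b` it is at least `(2a+b-4) ‖x‖²`, and the vectors supported on `A` with `s_A = 0` are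
eigenvectors for `2a+b-4 = n+a-4`. -/

theorem Finset.sum_mul_mul_add {ι R : Type*} [CommSemiring R] (s : Finset ι) (f : ι → R) (c k : R) :
    ∑ i ∈ s, f i * (c * f i + k) = c * ∑ i ∈ s, f i ^ 2 + k * ∑ i ∈ s, f i := by
  rw [Finset.mul_sum, Finset.mul_sum, ← Finset.sum_add_distrib]
  exact Finset.sum_congr rfl fun i _ => by ring

namespace Matrix.IsHermitian

variable {m : Type*} [Fintype m] [DecidableEq m] {A : Matrix m m ℝ}

theorem le_eigenvalues_of_forall_le_dotProduct_mulVec (hA : A.IsHermitian) {c : ℝ}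
    (h : ∀ x : m → ℝ, c * (x ⬝ᵥ x) ≤ x ⬝ᵥ (A *ᵥ x)) (i : m) : c ≤ hA.eigenvalues i := by
  have hv : ⇑(hA.eigenvectorBasis i) ⬝ᵥ ⇑(hA.eigenvectorBasis i) = 1 := by
    have := EuclideanSpace.inner_eq_star_dotProduct (hA.eigenvectorBasis i) (hA.eigenvectorBasis i)
    rwa [real_inner_self_eq_norm_sq, hA.eigenvectorBasis.orthonormal.norm_eq_one, one_pow,
      star_trivial, eq_comm] at this
  simpa [hv, hA.mulVec_eigenvectorBasis i] using h (hA.eigenvectorBasis i)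

theorem mem_range_eigenvalues_of_mulVec_eq_smul (hA : A.IsHermitian) {c : ℝ} {w : m → ℝ}
    (hw : w ≠ 0) (h : A *ᵥ w = c • w) : c ∈ Set.range hA.eigenvalues := by
  rw [← hA.spectrum_real_eq_range_eigenvalues, ← Matrix.spectrum_toLin']
  exact (Module.End.hasEigenvalue_of_hasEigenvector
    ⟨Module.End.mem_eigenspace_iff.mpr h, hw⟩).mem_spectrum

end Matrix.IsHermitian

theorem minEig_eq_of_mulVec_eq_smul {m : Type*} [Fintype m] [DecidableEq m] {A : Matrix m m ℝ}
    (hA : A.IsHermitian) {c : ℝ} (hle : ∀ x : m → ℝ, c * (x ⬝ᵥ x) ≤ x ⬝ᵥ (A *ᵥ x))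
    {w : m → ℝ} (hw : w ≠ 0) (hAw : A *ᵥ w = c • w) : minEig hA = c := by
  obtain ⟨i, hi⟩ := hA.mem_range_eigenvalues_of_mulVec_eq_smul hw hAw
  have : Nonempty m := ⟨i⟩
  exact le_antisymm (hi ▸ ciInf_le (Set.finite_range _).bddBelow i)
    (le_ciInf (hA.le_eigenvalues_of_forall_le_dotProduct_mulVec hle))

theorem transmission_eq_distMatrix_mulVec_one {U : Type*} [Fintype U] (G : SimpleGraph U) (u : U) :
    transmission G u = (distMatrix G *ᵥ 1) u := by
  simp [transmission, mulVec, dotProduct, distMatrix]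

namespace SimpleGraph

variable {V W : Type*}

theorem completeBipartiteGraph_dist_inl_inr (v : V) (w : W) :
    (completeBipartiteGraph V W).dist (.inl v) (.inr w) = 1 :=
  dist_eq_one_iff_adj.mpr (by simp)

theorem completeBipartiteGraph_dist_inr_inl (w : W) (v : V) :
    (completeBipartiteGraph V W).dist (.inr w) (.inl v) = 1 :=
  dist_eq_one_iff_adj.mpr (by simp)

theorem completeBipartiteGraph_dist_inl_inl [DecidableEq V] [Nonempty W] (v v' : V) :
    (completeBipartiteGraph V W).dist (.inl v) (.inl v') = if v = v' then 0 else 2 := by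
  split_ifs with h
  · simp [h]
  · obtain ⟨w⟩ := ‹Nonempty W›
    rw [dist, edist_eq_two_iff.mpr ⟨by simpa, by simp, ⟨.inr w, by simp [mem_commonNeighbors]⟩⟩]
    rfl

theorem completeBipartiteGraph_dist_inr_inr [DecidableEq W] [Nonempty V] (w w' : W) :
    (completeBipartiteGraph V W).dist (.inr w) (.inr w') = if w = w' then 0 else 2 := by
  split_ifs with h
  · simp [h]
  · obtain ⟨v⟩ := ‹Nonempty V›
    rw [dist, edist_eq_two_iff.mpr ⟨by simpa, by simp, ⟨.inl v, by simp [mem_commonNeighbors]⟩⟩]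
    rfl

end SimpleGraph

section CompleteBipartite

open SimpleGraph

variable {V W : Type*} [Fintype V] [Fintype W]

theorem distMatrix_completeBipartiteGraph_mulVec_inl [DecidableEq V] [Nonempty W]
    (x : V ⊕ W → ℝ) (v : V) :
    (distMatrix (completeBipartiteGraph V W) *ᵥ x) (.inl v) =
      2 * (∑ v', x (.inl v') - x (.inl v)) + ∑ w, x (.inr w) := by
  have hV :
      ∑ v', (if v = v' then 0 else 2 * x (.inl v')) =
        2 * (∑ v', x (.inl v') - x (.inl v)) := by
    rw [← Fintype.sum_ite_eq v fun v' => x (.inl v'), ← Finset.sum_sub_distrib, Finset.mul_sum]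
    refine Finset.sum_congr rfl fun v' _ => ?_
    split_ifs <;> ring
  simp [mulVec, dotProduct, distMatrix, Fintype.sum_sum_type, completeBipartiteGraph_dist_inl_inl,
    completeBipartiteGraph_dist_inl_inr, hV]

theorem distMatrix_completeBipartiteGraph_mulVec_inr [DecidableEq W] [Nonempty V]
    (x : V ⊕ W → ℝ) (w : W) :
    (distMatrix (completeBipartiteGraph V W) *ᵥ x) (.inr w) =
      2 * (∑ w', x (.inr w') - x (.inr w)) + ∑ v, x (.inl v) := by
  have hW :
      ∑ w', (if w = w' then 0 else 2 * x (.inr w')) =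
        2 * (∑ w', x (.inr w') - x (.inr w)) := by
    rw [← Fintype.sum_ite_eq w fun w' => x (.inr w'), ← Finset.sum_sub_distrib, Finset.mul_sum]
    refine Finset.sum_congr rfl fun w' _ => ?_
    split_ifs <;> ring
  simp [mulVec, dotProduct, distMatrix, Fintype.sum_sum_type, completeBipartiteGraph_dist_inr_inr,
    completeBipartiteGraph_dist_inr_inl, hW, add_comm]

variable [DecidableEq V] [DecidableEq W]

theorem distSLMatrix_completeBipartiteGraph_mulVec_inl [Nonempty W] (x : V ⊕ W → ℝ) (v : V) :
    (distSLMatrix (completeBipartiteGraph V W) *ᵥ x) (.inl v) =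
      (2 * Fintype.card V + Fintype.card W - 4) * x (.inl v) +
        2 * ∑ v', x (.inl v') + ∑ w, x (.inr w) := by
  rw [distSLMatrix, add_mulVec, Pi.add_apply, mulVec_diagonal,
    transmission_eq_distMatrix_mulVec_one, distMatrix_completeBipartiteGraph_mulVec_inl,
    distMatrix_completeBipartiteGraph_mulVec_inl]
  simp only [Pi.one_apply, Finset.sum_const, Finset.card_univ, nsmul_eq_mul, mul_one]
  ring

theorem distSLMatrix_completeBipartiteGraph_mulVec_inr [Nonempty V] (x : V ⊕ W → ℝ) (w : W) :
    (distSLMatrix (completeBipartiteGraph V W) *ᵥ x) (.inr w) =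
      (Fintype.card V + 2 * Fintype.card W - 4) * x (.inr w) +
        2 * ∑ w', x (.inr w') + ∑ v, x (.inl v) := by
  rw [distSLMatrix, add_mulVec, Pi.add_apply, mulVec_diagonal,
    transmission_eq_distMatrix_mulVec_one, distMatrix_completeBipartiteGraph_mulVec_inr,
    distMatrix_completeBipartiteGraph_mulVec_inr]
  simp only [Pi.one_apply, Finset.sum_const, Finset.card_univ, nsmul_eq_mul, mul_one]
  ring

theorem dotProduct_distSLMatrix_completeBipartiteGraph_mulVec [Nonempty V] [Nonempty W]
    (x : V ⊕ W → ℝ) :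
    x ⬝ᵥ (distSLMatrix (completeBipartiteGraph V W) *ᵥ x) =
      (2 * Fintype.card V + Fintype.card W - 4) * ∑ v, x (.inl v) ^ 2 +
        (Fintype.card V + 2 * Fintype.card W - 4) * ∑ w, x (.inr w) ^ 2 +
        (∑ v, x (.inl v)) ^ 2 + (∑ w, x (.inr w)) ^ 2 +
        (∑ v, x (.inl v) + ∑ w, x (.inr w)) ^ 2 := by
  simp only [dotProduct, Fintype.sum_sum_type, distSLMatrix_completeBipartiteGraph_mulVec_inl,
    distSLMatrix_completeBipartiteGraph_mulVec_inr, add_assoc, Finset.sum_mul_mul_add]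
  ring

theorem le_dotProduct_distSLMatrix_completeBipartiteGraph_mulVec [Nonempty V] [Nonempty W]
    (hVW : Fintype.card V ≤ Fintype.card W) (x : V ⊕ W → ℝ) :
    (2 * Fintype.card V + Fintype.card W - 4) * (x ⬝ᵥ x) ≤
      x ⬝ᵥ (distSLMatrix (completeBipartiteGraph V W) *ᵥ x) := by
  have hxx : x ⬝ᵥ x = ∑ v, x (.inl v) ^ 2 + ∑ w, x (.inr w) ^ 2 := by
    simp [dotProduct, Fintype.sum_sum_type, sq]
  have hcard : (Fintype.card V : ℝ) ≤ Fintype.card W := by exact_mod_cast hVW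
  have hW : 0 ≤ ((Fintype.card W : ℝ) - Fintype.card V) * ∑ w, x (.inr w) ^ 2 :=
    mul_nonneg (sub_nonneg.mpr hcard) (Finset.sum_nonneg fun w _ => sq_nonneg _)
  rw [dotProduct_distSLMatrix_completeBipartiteGraph_mulVec, hxx]
  nlinarith [sq_nonneg (∑ v, x (.inl v)), sq_nonneg (∑ w, x (.inr w)),
    sq_nonneg (∑ v, x (.inl v) + ∑ w, x (.inr w))]

theorem distSLMatrix_completeBipartiteGraph_mulVec_elim_zero [Nonempty V] [Nonempty W]
    {f : V → ℝ} (hf : ∑ v, f v = 0) :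
    distSLMatrix (completeBipartiteGraph V W) *ᵥ Sum.elim f 0 =
      (2 * Fintype.card V + Fintype.card W - 4 : ℝ) • Sum.elim f 0 := by
  funext u
  cases u <;> simp [distSLMatrix_completeBipartiteGraph_mulVec_inl,
    distSLMatrix_completeBipartiteGraph_mulVec_inr, hf]

theorem minEig_distSLMatrix_completeBipartiteGraph [Nontrivial V] [Nonempty W]
    (hVW : Fintype.card V ≤ Fintype.card W) :
    minEig (distSLMatrix_isHermitian (completeBipartiteGraph V W)) =
      2 * Fintype.card V + Fintype.card W - 4 := by
  obtain ⟨v, v', hvv'⟩ := exists_pair_ne V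
  have hw : (Sum.elim (Pi.single v 1 - Pi.single v' 1) 0 : V ⊕ W → ℝ) ≠ 0 := fun h => by
    simpa [hvv'] using congrFun h (.inl v)
  exact minEig_eq_of_mulVec_eq_smul _
    (le_dotProduct_distSLMatrix_completeBipartiteGraph_mulVec hVW) hw
    (distSLMatrix_completeBipartiteGraph_mulVec_elim_zero (by simp [Finset.sum_sub_distrib]))

end CompleteBipartite

theorem stmt11_general (n a : ℕ) (ha1 : 2 ≤ a) (ha2 : 2*a ≤ n) :
    minEig (distSLMatrix_isHermitian (completeBipartiteGraph (Fin a) (Fin (n - a)))) =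
      (n : ℝ) + a - 4 := by
  have : Nontrivial (Fin a) := Fin.nontrivial_iff_two_le.mpr ha1
  have : Nonempty (Fin (n - a)) := Fin.pos_iff_nonempty.mp (by omega)
  rw [minEig_distSLMatrix_completeBipartiteGraph (by simp only [Fintype.card_fin]; omega),
    Fintype.card_fin, Fintype.card_fin, Nat.cast_sub (by omega)]
  ring

theorem stmt11 (n a : ℕ) (hn : 4 ≤ n) (ha1 : 2 ≤ a) (ha2 : 2*a ≤ n) :
    minEig (distSLMatrix_isHermitian (completeBipartiteGraph (Fin a) (Fin (n - a)))) =
      (n : ℝ) + a - 4 :=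
  stmt11_general n a ha1 ha2
end
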